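/- If a state sequence t (length m+1) is obtained by forward execution of a straight-line trace and every statement writes exactly one variable, then consecutive states differ in at most one variable; hence the differential trace between t and any fixed reference state has gradient at most 1 at every position. -/

import Mathlib

/-! `diff` is the Hamming distance on states. An assignment changes a single coordinate, so
consecutive states are at distance at most one, and by the reverse triangle inequality the
distance to any fixed reference state then moves by at most one per step. -/

structure Stmt (V D : Type) where
  lhs : V
  rhs : (V → D) → D

def exec {V D : Type} [DecidableEq V] (s : Stmt V D) (σ : V → D) : V → D :=
  Function.update σ s.lhs (s.rhs σ)

def run {V D : Type} [DecidableEq V] (σ : V → D) (t : List (Stmt V D)) : V → D :=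
  t.foldl (fun σ s => exec s σ) σ

def diff {V D : Type} [Fintype V] [DecidableEq D] (σ τ : V → D) : ℕ :=
  (Finset.univ.filter fun v => σ v ≠ τ v).card

theorem hammingDist_update_le_one {ι : Type*} [Fintype ι] [DecidableEq ι] {β : ι → Type*}
    [∀ i, DecidableEq (β i)] (x : ∀ i, β i) (i : ι) (a : β i) :
    hammingDist x (Function.update x i a) ≤ 1 := by
  have hsub : (Finset.univ.filter fun j => x j ≠ Function.update x i a j) ⊆ {i} := by
    intro j hj
    rw [Finset.mem_singleton]
    by_contra hji
    simp [Function.update_of_ne hji] at hj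
  exact (Finset.card_le_card hsub).trans_eq (Finset.card_singleton i)

theorem Nat.dist_hammingDist_le {ι : Type*} [Fintype ι] {β : ι → Type*} [∀ i, DecidableEq (β i)]
    (x y z : ∀ i, β i) : Nat.dist (hammingDist x z) (hammingDist y z) ≤ hammingDist x y := by
  have hxz := hammingDist_triangle x y z
  have hyz := hammingDist_triangle y x z
  rw [hammingDist_comm y x] at hyz
  unfold Nat.dist
  omega

theorem diff_eq_hammingDist {V D : Type} [Fintype V] [DecidableEq D] (σ τ : V → D) :
    diff σ τ = hammingDist σ τ := rfl

theorem diff_exec_le_one {V D : Type} [DecidableEq V] [Fintype V] [DecidableEq D]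
    (s : Stmt V D) (σ : V → D) : diff σ (exec s σ) ≤ 1 :=
  hammingDist_update_le_one σ s.lhs (s.rhs σ)

theorem run_take_succ {V D : Type} [DecidableEq V] (pre : V → D) {t : List (Stmt V D)} {k : ℕ}
    (hk : k < t.length) : run pre (t.take (k + 1)) = exec t[k] (run pre (t.take k)) := by
  rw [List.take_succ_eq_append_getElem hk, run, List.foldl_append]
  rfl

/-- in a forward execution of a straight-line trace where every
statement writes exactly one variable, consecutive states differ in at most one
variable; hence the differential trace against any fixed reference state has
gradient at most 1 at every position. -/
theorem consecutive_states_diff_le_one {V D : Type} [DecidableEq V] [Fintype V] [DecidableEq D]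
    (t : List (Stmt V D)) (pre : V → D) :
    ∀ (k : ℕ), k < t.length →
      diff (run pre (t.take k)) (run pre (t.take (k + 1))) ≤ 1 ∧
      ∀ ref : V → D,
        Nat.dist (diff (run pre (t.take k)) ref) (diff (run pre (t.take (k + 1))) ref) ≤ 1 := by
  intro k hk
  have hstep : diff (run pre (t.take k)) (run pre (t.take (k + 1))) ≤ 1 := by
    rw [run_take_succ pre hk]
    exact diff_exec_le_one _ _
  refine ⟨hstep, fun ref => ?_⟩
  rw [diff_eq_hammingDist] at hstep
  simp only [diff_eq_hammingDist]
  exact (Nat.dist_hammingDist_le _ _ ref).trans hstep
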